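/- Under the hypotheses of the Riccati equation (41) with $Q(t)\geq 0$, $N(t)>0$, $G\geq 0$, any differentiable symmetric solution $P$ on $[0,T]$ satisfies $P(t)\geq 0$ for all $t\in[0,T]$. -/

import Mathlib

open Matrix Set Topology Filter

attribute [local instance] Matrix.normedAddCommGroup Matrix.normedSpace

namespace RiccatiAux

/-- Multiplication of matrix-valued functions preserves `ContinuousOn`. -/
lemma contOn_mul {α : Type*} [TopologicalSpace α] {k l p : ℕ}
    {f : α → Matrix (Fin k) (Fin l) ℝ} {g : α → Matrix (Fin l) (Fin p) ℝ} {s : Set α}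
    (hf : ContinuousOn f s) (hg : ContinuousOn g s) :
    ContinuousOn (fun x => f x * g x) s := by
  have h : Continuous fun q : Matrix (Fin k) (Fin l) ℝ × Matrix (Fin l) (Fin p) ℝ =>
      q.1 * q.2 := continuous_fst.matrix_mul continuous_snd
  exact h.comp_continuousOn (hf.prodMk hg)

/-- If `h` is nonneg just to the right of `t₁` and vanishes at `t₁`, its derivative at `t₁`
is nonnegative. -/
lemma deriv_nonneg_of_right_nonneg {h : ℝ → ℝ} {d t₁ T : ℝ} (hlt : t₁ < T)
    (hd : HasDerivAt h d t₁) (h0 : h t₁ = 0) (hpos : ∀ t ∈ Ioc t₁ T, 0 ≤ h t) :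
    0 ≤ d := by
  have hw : HasDerivWithinAt h d (Ioc t₁ T) t₁ := hd.hasDerivWithinAt
  rw [hasDerivWithinAt_iff_tendsto_slope] at hw
  have hdiff : Ioc t₁ T \ {t₁} = Ioc t₁ T :=
    Set.diff_singleton_eq_self (by simp)
  rw [hdiff] at hw
  have hne : (𝓝[Ioc t₁ T] t₁).NeBot := by
    rw [← mem_closure_iff_nhdsWithin_neBot, closure_Ioc hlt.ne]
    exact ⟨le_refl _, hlt.le⟩
  refine ge_of_tendsto hw ?_
  filter_upwards [self_mem_nhdsWithin] with t ht
  have h1 : 0 ≤ h t := hpos t ht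
  have h2 : 0 < t - t₁ := sub_pos.2 ht.1
  rw [slope_def_field, h0, sub_zero]
  positivity


lemma dot_transpose_mulVec {k l : ℕ} (M : Matrix (Fin l) (Fin k) ℝ) (x : Fin k → ℝ)
    (y : Fin l → ℝ) : x ⬝ᵥ (Mᵀ *ᵥ y) = (M *ᵥ x) ⬝ᵥ y := by
  rw [Matrix.dotProduct_mulVec, Matrix.vecMul_transpose]

lemma dotProduct_self_nonneg' {k : ℕ} (x : Fin k → ℝ) : 0 ≤ x ⬝ᵥ x :=
  Finset.sum_nonneg fun i _ => mul_self_nonneg _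

/-- Positive semidefiniteness from the quadratic form on unit vectors. -/
lemma posSemidef_of_unit {k : ℕ} {M : Matrix (Fin k) (Fin k) ℝ} (hH : Mᵀ = M)
    (h : ∀ x : Fin k → ℝ, x ⬝ᵥ x = 1 → 0 ≤ x ⬝ᵥ M *ᵥ x) : M.PosSemidef := by
  rw [posSemidef_iff_dotProduct_mulVec]
  constructor
  · rwa [Matrix.IsHermitian, conjTranspose_eq_transpose_of_trivial]
  intro x
  rw [show star x = x from funext fun i => star_trivial _]
  rcases eq_or_ne x 0 with rfl | hx
  · simp
  have hxx : 0 < x ⬝ᵥ x :=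
    lt_of_le_of_ne (dotProduct_self_nonneg' x) (Ne.symm (mt dotProduct_self_eq_zero.mp hx))
  set r : ℝ := Real.sqrt (x ⬝ᵥ x) with hr
  have hrpos : 0 < r := Real.sqrt_pos.2 hxx
  have hrr : r * r = x ⬝ᵥ x := Real.mul_self_sqrt hxx.le
  have hunit : (r⁻¹ • x) ⬝ᵥ (r⁻¹ • x) = 1 := by
    rw [smul_dotProduct, dotProduct_smul, smul_eq_mul, smul_eq_mul, ← hrr]
    field_simp
  have := h (r⁻¹ • x) hunit
  rw [smul_dotProduct, mulVec_smul, dotProduct_smul, smul_eq_mul, smul_eq_mul] at this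
  have h2 : (0:ℝ) < r⁻¹ * r⁻¹ := by positivity
  nlinarith

/-- Crude bound on the quadratic form by the sum of absolute values of entries. -/
lemma unit_abs_le {k : ℕ} {x : Fin k → ℝ} (hx : x ⬝ᵥ x = 1) (i : Fin k) : |x i| ≤ 1 := by
  have h1 : x i * x i ≤ x ⬝ᵥ x := Finset.single_le_sum (f := fun j => x j * x j)
    (fun j _ => mul_self_nonneg _) (Finset.mem_univ i)
  rw [hx] at h1
  exact abs_le_one_iff_mul_self_le_one.2 h1

lemma abs_quad_le {k : ℕ} (M : Matrix (Fin k) (Fin k) ℝ) {x : Fin k → ℝ}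
    (hx : x ⬝ᵥ x = 1) : x ⬝ᵥ M *ᵥ x ≤ ∑ i, ∑ j, |M i j| := by
  calc x ⬝ᵥ M *ᵥ x = ∑ i, ∑ j, x i * (M i j * x j) := by
        simp [dotProduct, mulVec, Finset.mul_sum]
    _ ≤ ∑ i, ∑ j, |M i j| := by
        refine Finset.sum_le_sum fun i _ => Finset.sum_le_sum fun j _ => ?_
        calc x i * (M i j * x j) ≤ |x i * (M i j * x j)| := le_abs_self _
          _ = |x i| * |M i j| * |x j| := by rw [abs_mul, abs_mul]; ring
          _ ≤ 1 * |M i j| * 1 := by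
              have h1 := unit_abs_le hx i
              have h2 := unit_abs_le hx j
              gcongr
          _ = |M i j| := by ring

/-- Crude bound on `|Mx|²`. -/
lemma mulVec_sq_le {k l : ℕ} (M : Matrix (Fin k) (Fin l) ℝ) {x : Fin l → ℝ}
    (hx : x ⬝ᵥ x = 1) : (M *ᵥ x) ⬝ᵥ (M *ᵥ x) ≤ (∑ i, ∑ j, |M i j|) ^ 2 := by
  have hrow : ∀ i, |(M *ᵥ x) i| ≤ ∑ j, |M i j| := by
    intro i
    calc |(M *ᵥ x) i| = |∑ j, M i j * x j| := by rw [mulVec]; rfl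
      _ ≤ ∑ j, |M i j * x j| := Finset.abs_sum_le_sum_abs _ _
      _ ≤ ∑ j, |M i j| := by
          refine Finset.sum_le_sum fun j _ => ?_
          rw [abs_mul]
          have h2 := unit_abs_le hx j
          have := abs_nonneg (M i j)
          nlinarith
  calc (M *ᵥ x) ⬝ᵥ (M *ᵥ x) = ∑ i, ((M *ᵥ x) i) ^ 2 := by
        simp [dotProduct, sq]
    _ ≤ ∑ i, (∑ j, |M i j|) ^ 2 := by
        refine Finset.sum_le_sum fun i _ => ?_
        rw [← sq_abs]
        exact pow_le_pow_left₀ (abs_nonneg _) (hrow i) 2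
    _ ≤ (∑ i, ∑ j, |M i j|) ^ 2 :=
        Finset.sum_sq_le_sq_sum_of_nonneg fun i _ =>
          Finset.sum_nonneg fun j _ => abs_nonneg _


/-- Completion of squares for the Riccati right-hand side. -/
lemma key_identity {k l : ℕ} (P A C Q : Matrix (Fin k) (Fin k) ℝ)
    (B D : Matrix (Fin k) (Fin l) ℝ) (N W : Matrix (Fin l) (Fin l) ℝ)
    (hPs : Pᵀ = P) (hWs : Wᵀ = W) (hW : W * (N + Dᵀ * P * D) = 1) :
    -(P * A) - Aᵀ * P - Cᵀ * P * C - Q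
      + (P * B + Cᵀ * P * D) * W * (P * B + Cᵀ * P * D)ᵀ
    = -(P * (A - B * (W * (P * B + Cᵀ * P * D)ᵀ)))
      - (A - B * (W * (P * B + Cᵀ * P * D)ᵀ))ᵀ * P
      - (C - D * (W * (P * B + Cᵀ * P * D)ᵀ))ᵀ * P * (C - D * (W * (P * B + Cᵀ * P * D)ᵀ))
      - (Q + (W * (P * B + Cᵀ * P * D)ᵀ)ᵀ * N * (W * (P * B + Cᵀ * P * D)ᵀ)) := by
  have hW' : (N + Dᵀ * P * D) * W = 1 := mul_eq_one_comm.mp hW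
  set S : Matrix (Fin k) (Fin l) ℝ := P * B + Cᵀ * P * D with hS
  set K : Matrix (Fin l) (Fin k) ℝ := W * Sᵀ with hK
  have hKt : Kᵀ = S * W := by
    rw [hK, transpose_mul, transpose_transpose, hWs]
  have h1 : S * K = S * W * Sᵀ := by rw [hK, Matrix.mul_assoc]
  have h2 : Kᵀ * Sᵀ = S * W * Sᵀ := by rw [hKt]
  have hSt : Sᵀ = Bᵀ * P + Dᵀ * (P * C) := by
    rw [hS, transpose_add, transpose_mul, transpose_mul, transpose_mul,
      transpose_transpose, hPs]
  have h3 : Kᵀ * (N * K) + Kᵀ * (Dᵀ * (P * (D * K))) = S * W * Sᵀ := by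
    have e1 : (N + Dᵀ * P * D) * K = Sᵀ := by
      rw [hK, ← Matrix.mul_assoc, hW', Matrix.one_mul]
    calc Kᵀ * (N * K) + Kᵀ * (Dᵀ * (P * (D * K)))
        = Kᵀ * ((N + Dᵀ * P * D) * K) := by
          rw [Matrix.add_mul, Matrix.mul_add]
          simp only [Matrix.mul_assoc]
      _ = Kᵀ * Sᵀ := by rw [e1]
      _ = S * W * Sᵀ := h2
  have main : -(P * (A - B * K)) - (A - B * K)ᵀ * P
        - (C - D * K)ᵀ * P * (C - D * K) - (Q + Kᵀ * N * K)
      = (-(P * A) - Aᵀ * P - Cᵀ * P * C - Q)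
        + (S * K + Kᵀ * Sᵀ - (Kᵀ * (N * K) + Kᵀ * (Dᵀ * (P * (D * K))))) := by
    rw [hSt, hS]
    simp only [transpose_sub, transpose_mul, transpose_transpose, hPs,
      Matrix.sub_mul, Matrix.mul_sub, Matrix.add_mul, Matrix.mul_add, Matrix.mul_assoc]
    abel
  rw [main, h1, h2, h3]
  abel

end RiccatiAux
set_option maxHeartbeats 1000000 in
theorem stmt_5 {n m : ℕ} (T : ℝ) (hT : 0 < T)
    (Q A C : ℝ → Matrix (Fin n) (Fin n) ℝ)
    (B D : ℝ → Matrix (Fin n) (Fin m) ℝ)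
    (N : ℝ → Matrix (Fin m) (Fin m) ℝ)
    (G : Matrix (Fin n) (Fin n) ℝ)
    (hQcont : Continuous Q) (hAcont : Continuous A) (hCcont : Continuous C)
    (hBcont : Continuous B) (hDcont : Continuous D) (hNcont : Continuous N)
    (hQ : ∀ t ∈ Icc 0 T, (Q t).PosSemidef)
    (hN : ∀ t ∈ Icc 0 T, (N t).PosDef)
    (hG : G.PosSemidef)
    (P : ℝ → Matrix (Fin n) (Fin n) ℝ)
    (hPsymm : ∀ t ∈ Icc 0 T, (P t)ᵀ = P t)
    (hPT : P T = G)
    (hND : ∀ t ∈ Icc 0 T, (N t + (D t)ᵀ * P t * D t).PosDef)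
    (hP : ∀ t ∈ Icc 0 T, HasDerivAt P
      (-(P t * A t) - (A t)ᵀ * P t - (C t)ᵀ * P t * C t - Q t
        + (P t * B t + (C t)ᵀ * P t * D t)
          * (N t + (D t)ᵀ * P t * D t)⁻¹
          * (P t * B t + (C t)ᵀ * P t * D t)ᵀ) t) :
    ∀ t ∈ Icc 0 T, (P t).PosSemidef := by
  classical
  have hstar : ∀ {k : ℕ} (y : Fin k → ℝ), star y = y := fun y => funext fun i => star_trivial _
  set R : ℝ → Matrix (Fin m) (Fin m) ℝ := fun s => N s + (D s)ᵀ * P s * D s with hRdef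
  set W : ℝ → Matrix (Fin m) (Fin m) ℝ := fun s => (R s)⁻¹ with hWdef
  set S : ℝ → Matrix (Fin n) (Fin m) ℝ := fun s => P s * B s + (C s)ᵀ * P s * D s with hSdef
  set K : ℝ → Matrix (Fin m) (Fin n) ℝ := fun s => W s * (S s)ᵀ with hKdef
  set F : ℝ → Matrix (Fin n) (Fin n) ℝ := fun s => A s - B s * K s with hFdef
  set E : ℝ → Matrix (Fin n) (Fin n) ℝ := fun s => C s - D s * K s with hEdef
  have hRD : ∀ s, R s = N s + (D s)ᵀ * P s * D s := fun s => rfl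
  have hRPD : ∀ s ∈ Icc 0 T, (R s).PosDef := fun s hs => by rw [hRD]; exact hND s hs
  have hRsymm : ∀ s ∈ Icc 0 T, (R s)ᵀ = R s := fun s hs => by
    have := (hRPD s hs).isHermitian
    rwa [Matrix.IsHermitian, conjTranspose_eq_transpose_of_trivial] at this
  have hWsymm : ∀ s ∈ Icc 0 T, (W s)ᵀ = W s := fun s hs => by
    show ((R s)⁻¹)ᵀ = (R s)⁻¹
    rw [Matrix.transpose_nonsing_inv, hRsymm s hs]
  have hWR : ∀ s ∈ Icc 0 T, W s * R s = 1 := fun s hs =>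
    Matrix.nonsing_inv_mul (R s) (hRPD s hs).det_pos.ne'.isUnit
  have hPcont : ContinuousOn P (Icc 0 T) := fun s hs =>
    (hP s hs).continuousAt.continuousWithinAt
  -- derivative in completed-square form
  have hderiv : ∀ s ∈ Icc 0 T, HasDerivAt P
      (-(P s * F s) - (F s)ᵀ * P s - (E s)ᵀ * P s * E s
        - (Q s + (K s)ᵀ * N s * K s)) s := by
    intro s hs
    have h0 := hP s hs
    have heq := RiccatiAux.key_identity (P s) (A s) (C s) (Q s) (B s) (D s) (N s) (W s)
      (hPsymm s hs) (hWsymm s hs) (hWR s hs)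
    have h1 : HasDerivAt P (-(P s * A s) - (A s)ᵀ * P s - (C s)ᵀ * P s * C s - Q s
      + (P s * B s + (C s)ᵀ * P s * D s) * W s * (P s * B s + (C s)ᵀ * P s * D s)ᵀ) s := h0
    rw [heq] at h1
    exact h1
  -- continuity of all the pieces
  have htransC : ∀ {k l : ℕ} (M : Matrix (Fin k) (Fin l) ℝ → Matrix (Fin k) (Fin l) ℝ),
      True := fun _ => trivial
  have hRcont : ContinuousOn R (Icc 0 T) := by
    apply ContinuousOn.add hNcont.continuousOn
    exact RiccatiAux.contOn_mul
      (RiccatiAux.contOn_mul hDcont.matrix_transpose.continuousOn hPcont) hDcont.continuousOn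
  have hWcont : ContinuousOn W (Icc 0 T) := by
    have hdet : ContinuousOn (fun s => (R s).det) (Icc 0 T) :=
      (Continuous.matrix_det continuous_id).comp_continuousOn hRcont
    have hadj : ContinuousOn (fun s => (R s).adjugate) (Icc 0 T) :=
      (Continuous.matrix_adjugate continuous_id).comp_continuousOn hRcont
    have hdetne : ∀ s ∈ Icc 0 T, (R s).det ≠ 0 := fun s hs => (hRPD s hs).det_pos.ne'
    refine (ContinuousOn.smul (hdet.inv₀ hdetne) hadj).congr fun s hs => ?_
    show (R s)⁻¹ = _
    rw [Matrix.inv_def, Ring.inverse_eq_inv]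
    rfl
  have hScont : ContinuousOn S (Icc 0 T) :=
    (RiccatiAux.contOn_mul hPcont hBcont.continuousOn).add
      (RiccatiAux.contOn_mul
        (RiccatiAux.contOn_mul hCcont.matrix_transpose.continuousOn hPcont) hDcont.continuousOn)
  have hKcont : ContinuousOn K (Icc 0 T) :=
    RiccatiAux.contOn_mul hWcont
      ((Continuous.matrix_transpose continuous_id).comp_continuousOn hScont)
  have hFcont : ContinuousOn F (Icc 0 T) :=
    hAcont.continuousOn.sub (RiccatiAux.contOn_mul hBcont.continuousOn hKcont)
  have hEcont : ContinuousOn E (Icc 0 T) :=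
    hCcont.continuousOn.sub (RiccatiAux.contOn_mul hDcont.continuousOn hKcont)
  -- bounds
  set cF : ℝ → ℝ := fun s => ∑ i, ∑ j, |F s i j| with hcFdef
  set cE : ℝ → ℝ := fun s => ∑ i, ∑ j, |E s i j| with hcEdef
  have habs : Continuous (fun M : Matrix (Fin n) (Fin n) ℝ => ∑ i, ∑ j, |M i j|) := by
    refine continuous_finset_sum _ fun i _ => continuous_finset_sum _ fun j _ => ?_
    exact ((continuous_apply j).comp (continuous_apply i)).abs
  have hcFcont : ContinuousOn cF (Icc 0 T) := habs.comp_continuousOn hFcont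
  have hcEcont : ContinuousOn cE (Icc 0 T) := habs.comp_continuousOn hEcont
  have hcFnn : ∀ s, 0 ≤ cF s := fun s =>
    Finset.sum_nonneg fun i _ => Finset.sum_nonneg fun j _ => abs_nonneg _
  have hcEnn : ∀ s, 0 ≤ cE s := fun s =>
    Finset.sum_nonneg fun i _ => Finset.sum_nonneg fun j _ => abs_nonneg _
  obtain ⟨s₀, hs₀, hmaxL⟩ := isCompact_Icc.exists_isMaxOn (f := fun s => 2 * cF s + cE s ^ 2) (nonempty_Icc.2 hT.le)
    ((continuousOn_const.mul hcFcont).add (hcEcont.pow 2))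
  set L : ℝ := 2 * cF s₀ + cE s₀ ^ 2 + 1 with hLdef
  have hLbound : ∀ s ∈ Icc 0 T, 2 * cF s + cE s ^ 2 + 1 ≤ L := fun s hs => by
    have := hmaxL hs; simp only [Set.mem_setOf_eq] at this; simp only [hLdef]; linarith
  have hL1 : 1 ≤ L := by
    have h1 := hcFnn s₀; have h2 := sq_nonneg (cE s₀); simp only [hLdef]; nlinarith
  -- the unit sphere
  set Sph : Set (Fin n → ℝ) := {x | x ⬝ᵥ x = 1} with hSphdef
  have hdotc : Continuous fun x : Fin n → ℝ => x ⬝ᵥ x :=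
    continuous_finset_sum _ fun i _ => (continuous_apply i).mul (continuous_apply i)
  have hSphC : IsCompact Sph := by
    refine (isCompact_closedBall (0 : Fin n → ℝ) 1).of_isClosed_subset
      (isClosed_eq hdotc continuous_const) ?_
    intro x hx
    rw [mem_closedBall_zero_iff]
    rw [pi_norm_le_iff_of_nonneg zero_le_one]
    intro i
    rw [Real.norm_eq_abs]
    exact RiccatiAux.unit_abs_le hx i
  -- clamping
  set clamp : ℝ → ℝ := fun s => max 0 (min s T) with hclampdef
  have hclampc : Continuous clamp := continuous_const.max (continuous_id.min continuous_const)
  have hclampmem : ∀ s, clamp s ∈ Icc 0 T :=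
    fun s => ⟨le_max_left _ _, max_le hT.le (min_le_right _ _)⟩
  have hclampeq : ∀ s ∈ Icc 0 T, clamp s = s := fun s hs => by
    show max 0 (min s T) = s
    rw [min_eq_left hs.2, max_eq_right hs.1]
  have hPccont : Continuous (fun s => P (clamp s)) := hPcont.comp_continuous hclampc hclampmem
  -- main claim
  have hclaim : ∀ ε > 0, ∀ s ∈ Icc 0 T, ∀ x ∈ Sph,
      0 < x ⬝ᵥ P s *ᵥ x + ε * Real.exp (L * (T - s)) := by
    intro ε hε
    by_contra hcon
    push_neg at hcon
    obtain ⟨s₂, hs₂, x₂, hx₂, hval⟩ := hcon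
    set q : ℝ × (Fin n → ℝ) → ℝ :=
      fun p => p.2 ⬝ᵥ P (clamp p.1) *ᵥ p.2 + ε * Real.exp (L * (T - p.1)) with hqdef
    have hqcont : Continuous q := by
      apply Continuous.add
      · exact continuous_snd.dotProduct
          ((hPccont.comp continuous_fst).matrix_mulVec continuous_snd)
      · exact continuous_const.mul
          (Real.continuous_exp.comp (continuous_const.mul (continuous_const.sub continuous_fst)))
    set Bad : Set (ℝ × (Fin n → ℝ)) := (Icc 0 T ×ˢ Sph) ∩ q ⁻¹' (Iic 0) with hBaddef
    have hBadC : IsCompact Bad :=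
      (isCompact_Icc.prod hSphC).inter_right (isClosed_Iic.preimage hqcont)
    have hqeq : ∀ s ∈ Icc 0 T, ∀ y : Fin n → ℝ,
        q (s, y) = y ⬝ᵥ P s *ᵥ y + ε * Real.exp (L * (T - s)) := by
      intro s hs y
      show y ⬝ᵥ P (clamp s) *ᵥ y + _ = _
      rw [hclampeq s hs]
    have hBadne : Bad.Nonempty := by
      refine ⟨(s₂, x₂), ⟨⟨hs₂, hx₂⟩, ?_⟩⟩
      show q (s₂, x₂) ≤ 0
      rw [hqeq s₂ hs₂ x₂]
      exact hval
    obtain ⟨⟨t₁, x⟩, hp₁, hmax⟩ := hBadC.exists_isMaxOn (f := fun p => p.1) hBadne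
      continuous_fst.continuousOn
    obtain ⟨⟨ht₁, hxS⟩, hqle⟩ := hp₁
    replace ht₁ : t₁ ∈ Icc 0 T := ht₁
    replace hxS : x ∈ Sph := hxS
    replace hqle : q (t₁, x) ≤ 0 := hqle
    replace hmax : ∀ p ∈ Bad, p.1 ≤ t₁ := fun p hp => hmax hp
    have hxx : x ⬝ᵥ x = 1 := hxS
    have hq₁ : x ⬝ᵥ P t₁ *ᵥ x + ε * Real.exp (L * (T - t₁)) ≤ 0 := by
      have : q (t₁, x) ≤ 0 := hqle
      rwa [hqeq t₁ ht₁ x] at this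
    have ht₁T : t₁ < T := by
      rcases lt_or_eq_of_le ht₁.2 with h | h
      · exact h
      · exfalso
        rw [h, hPT, sub_self, mul_zero, Real.exp_zero, mul_one] at hq₁
        have h2 := hG.dotProduct_mulVec_nonneg x
        rw [hstar x] at h2
        linarith
    set e : ℝ := ε * Real.exp (L * (T - t₁)) with hedef
    have hepos : 0 < e := by positivity
    -- strict positivity strictly after t₁
    have hafter : ∀ s ∈ Ioc t₁ T, ∀ y ∈ Sph,
        0 < y ⬝ᵥ P s *ᵥ y + ε * Real.exp (L * (T - s)) := by
      intro s hs y hy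
      by_contra hc
      push_neg at hc
      have hsI : s ∈ Icc 0 T := ⟨ht₁.1.trans hs.1.le, hs.2⟩
      have hmem : (s, y) ∈ Bad := ⟨⟨hsI, hy⟩, by
        show q (s, y) ≤ 0
        rw [hqeq s hsI y]; exact hc⟩
      exact absurd (hmax _ hmem) (not_le.2 hs.1)
    have hneB : (𝓝[Ioc t₁ T] t₁).NeBot := by
      rw [← mem_closure_iff_nhdsWithin_neBot, closure_Ioc ht₁T.ne]
      exact ⟨le_refl _, ht₁T.le⟩
    -- the perturbed matrix at t₁ is positive semidefinite
    set Me : Matrix (Fin n) (Fin n) ℝ := P t₁ + e • 1 with hMedef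
    have hMequad : ∀ y : Fin n → ℝ, y ⬝ᵥ Me *ᵥ y = y ⬝ᵥ P t₁ *ᵥ y + e * (y ⬝ᵥ y) := by
      intro y
      show y ⬝ᵥ (P t₁ + e • 1) *ᵥ y = _
      rw [Matrix.add_mulVec, dotProduct_add, Matrix.smul_mulVec, Matrix.one_mulVec,
        dotProduct_smul, smul_eq_mul]
    have hMePSD : Me.PosSemidef := by
      apply RiccatiAux.posSemidef_of_unit
      · show (P t₁ + e • 1)ᵀ = P t₁ + e • 1
        rw [transpose_add, transpose_smul, transpose_one, hPsymm t₁ ht₁]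
      · intro y hy
        rw [hMequad y, hy, mul_one]
        have hcw : ContinuousWithinAt
            (fun s => y ⬝ᵥ P s *ᵥ y + ε * Real.exp (L * (T - s))) (Ioc t₁ T) t₁ := by
          apply ContinuousWithinAt.add
          · have hgc : ContinuousOn (fun s => y ⬝ᵥ P s *ᵥ y) (Icc 0 T) :=
              (continuous_const.dotProduct
                (continuous_id.matrix_mulVec continuous_const)).comp_continuousOn hPcont
            exact (hgc t₁ ht₁).mono (Ioc_subset_Icc_self.trans
              (Icc_subset_Icc ht₁.1 (le_refl T)))
          · exact (continuous_const.mul (Real.continuous_exp.comp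
              (continuous_const.mul (continuous_const.sub continuous_id)))).continuousWithinAt
        refine ge_of_tendsto hcw ?_
        filter_upwards [self_mem_nhdsWithin] with s hs
        exact (hafter s hs y hy).le
    have hq₁0 : x ⬝ᵥ Me *ᵥ x = 0 := by
      have hge := hMePSD.dotProduct_mulVec_nonneg x
      rw [hstar x] at hge
      have hle : x ⬝ᵥ Me *ᵥ x ≤ 0 := by rw [hMequad x, hxx, mul_one]; exact hq₁
      linarith
    have hMex : Me *ᵥ x = 0 := by
      refine (hMePSD.dotProduct_mulVec_zero_iff x).mp ?_
      rw [hstar x]; exact hq₁0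
    have hPx : P t₁ *ᵥ x = -(e • x) := by
      have h1 : P t₁ *ᵥ x + e • x = 0 := by
        have : (P t₁ + e • 1) *ᵥ x = 0 := hMex
        rwa [Matrix.add_mulVec, Matrix.smul_mulVec, Matrix.one_mulVec] at this
      linear_combination (norm := module) h1
    -- derivative of the scalar function at t₁
    set P' : Matrix (Fin n) (Fin n) ℝ :=
      -(P t₁ * F t₁) - (F t₁)ᵀ * P t₁ - (E t₁)ᵀ * P t₁ * E t₁
        - (Q t₁ + (K t₁)ᵀ * N t₁ * K t₁) with hP'def
    set φlin : Matrix (Fin n) (Fin n) ℝ →ₗ[ℝ] ℝ :=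
      { toFun := fun M => x ⬝ᵥ M *ᵥ x
        map_add' := fun M₁ M₂ => by
          simp [Matrix.add_mulVec, dotProduct_add]
        map_smul' := fun c M => by
          simp [Matrix.smul_mulVec, dotProduct_smul] } with hφdef
    have hφ : HasDerivAt (fun s => x ⬝ᵥ P s *ᵥ x) (x ⬝ᵥ P' *ᵥ x) t₁ := by
      have h := ((LinearMap.toContinuousLinearMap φlin).hasFDerivAt
        (x := P t₁)).comp_hasDerivAt t₁ (hderiv t₁ ht₁)
      exact h
    have hexp : HasDerivAt (fun s => ε * Real.exp (L * (T - s)))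
        (ε * (Real.exp (L * (T - t₁)) * (L * (-1)))) t₁ := by
      have h1 : HasDerivAt (fun s : ℝ => L * (T - s)) (L * (-1)) t₁ :=
        ((hasDerivAt_id t₁).const_sub T).const_mul L
      exact h1.exp.const_mul ε
    have hh := hφ.add hexp
    -- compute and bound the derivative value
    set z : Fin n → ℝ := E t₁ *ᵥ x with hzdef
    set u : Fin m → ℝ := K t₁ *ᵥ x with hudef
    have hdotP : ∀ v : Fin n → ℝ, x ⬝ᵥ P t₁ *ᵥ v = -(e * (x ⬝ᵥ v)) := by
      intro v
      have h1 : x ⬝ᵥ (P t₁)ᵀ *ᵥ v = (P t₁ *ᵥ x) ⬝ᵥ v :=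
        RiccatiAux.dot_transpose_mulVec _ _ _
      rw [hPsymm t₁ ht₁] at h1
      rw [h1, hPx, neg_dotProduct, smul_dotProduct, smul_eq_mul]
    have hterm1 : x ⬝ᵥ (P t₁ * F t₁) *ᵥ x = -(e * (x ⬝ᵥ F t₁ *ᵥ x)) := by
      rw [← Matrix.mulVec_mulVec]
      exact hdotP _
    have hterm2 : x ⬝ᵥ ((F t₁)ᵀ * P t₁) *ᵥ x = -(e * (x ⬝ᵥ F t₁ *ᵥ x)) := by
      rw [← Matrix.mulVec_mulVec, RiccatiAux.dot_transpose_mulVec, hPx, dotProduct_neg,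
        dotProduct_smul, smul_eq_mul, dotProduct_comm]
    have hterm3 : x ⬝ᵥ ((E t₁)ᵀ * P t₁ * E t₁) *ᵥ x = z ⬝ᵥ Me *ᵥ z - e * (z ⬝ᵥ z) := by
      rw [← Matrix.mulVec_mulVec, ← Matrix.mulVec_mulVec, RiccatiAux.dot_transpose_mulVec]
      have h2 := hMequad z
      linarith
    have hterm4 : x ⬝ᵥ (Q t₁ + (K t₁)ᵀ * N t₁ * K t₁) *ᵥ x
        = x ⬝ᵥ Q t₁ *ᵥ x + u ⬝ᵥ N t₁ *ᵥ u := by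
      rw [Matrix.add_mulVec, dotProduct_add, ← Matrix.mulVec_mulVec, ← Matrix.mulVec_mulVec,
        RiccatiAux.dot_transpose_mulVec]
    have hQx : 0 ≤ x ⬝ᵥ Q t₁ *ᵥ x := by
      have h2 := (hQ t₁ ht₁).dotProduct_mulVec_nonneg x; rwa [hstar x] at h2
    have hNu : 0 ≤ u ⬝ᵥ N t₁ *ᵥ u := by
      have h2 := (hN t₁ ht₁).posSemidef.dotProduct_mulVec_nonneg u; rwa [hstar u] at h2
    have hzMe : 0 ≤ z ⬝ᵥ Me *ᵥ z := by
      have h2 := hMePSD.dotProduct_mulVec_nonneg z; rwa [hstar z] at h2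
    have hzz : z ⬝ᵥ z ≤ cE t₁ ^ 2 := RiccatiAux.mulVec_sq_le (E t₁) hxx
    have hFb : x ⬝ᵥ F t₁ *ᵥ x ≤ cF t₁ := RiccatiAux.abs_quad_le (F t₁) hxx
    have hP'val : x ⬝ᵥ P' *ᵥ x = -(x ⬝ᵥ (P t₁ * F t₁) *ᵥ x) - x ⬝ᵥ ((F t₁)ᵀ * P t₁) *ᵥ x
        - x ⬝ᵥ ((E t₁)ᵀ * P t₁ * E t₁) *ᵥ x
        - x ⬝ᵥ (Q t₁ + (K t₁)ᵀ * N t₁ * K t₁) *ᵥ x := by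
      rw [hP'def]
      simp [Matrix.sub_mulVec, Matrix.neg_mulVec, dotProduct_sub, dotProduct_neg]
    have hdlt : x ⬝ᵥ P' *ᵥ x + ε * (Real.exp (L * (T - t₁)) * (L * (-1))) < 0 := by
      have hLb := hLbound t₁ ht₁
      rw [hP'val, hterm1, hterm2, hterm3, hterm4]
      have hrw : ε * (Real.exp (L * (T - t₁)) * (L * (-1))) = -(e * L) := by
        rw [hedef]; ring
      rw [hrw]
      nlinarith [mul_le_mul_of_nonneg_left hFb hepos.le,
        mul_le_mul_of_nonneg_left hzz hepos.le,
        mul_le_mul_of_nonneg_left hLb hepos.le]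
    have hd0 : 0 ≤ x ⬝ᵥ P' *ᵥ x + ε * (Real.exp (L * (T - t₁)) * (L * (-1))) := by
      refine RiccatiAux.deriv_nonneg_of_right_nonneg ht₁T hh ?_ ?_
      · show x ⬝ᵥ P t₁ *ᵥ x + ε * Real.exp (L * (T - t₁)) = 0
        have h2 := hq₁0
        rw [hMequad x, hxx, mul_one] at h2
        exact h2
      · intro s hs
        exact (hafter s hs x hxS).le
    linarith
  -- conclude
  intro t ht
  apply RiccatiAux.posSemidef_of_unit (hPsymm t ht)
  intro y hy
  by_contra hneg
  push_neg at hneg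
  have hexp0 : (0:ℝ) < Real.exp (L * (T - t)) := Real.exp_pos _
  have hεpos : 0 < -(y ⬝ᵥ P t *ᵥ y) / (2 * Real.exp (L * (T - t))) := by
    apply div_pos (by linarith) (by linarith)
  have hcl := hclaim _ hεpos t ht y hy
  have heq : -(y ⬝ᵥ P t *ᵥ y) / (2 * Real.exp (L * (T - t))) * Real.exp (L * (T - t))
      = -(y ⬝ᵥ P t *ᵥ y) / 2 := by
    field_simp
  rw [heq] at hcl
  linarith
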